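/- The squared hyperbolic distance admits the second-order expansion consistent with Lemma (Taylor): for unit vectors u, v ∈ ℝ² with angle φ and curvature k = −1 (r = 1), writing d(t) = 2·artanh(√(1 − 2/D(t))) with D(t) = 1 + cosh(ta)·cosh(tb) − sinh(ta)·sinh(tb)·cos φ where a = ‖u‖, b = ‖v‖, one has d(t)² = t²(a² + b² − 2ab cos φ) + (1/3)·t⁴·a²b²·sin²φ + o(t⁴) as t → 0. -/

import Mathlib

open Real Filter Asymptotics InnerProductSpace

/-- Inverse hyperbolic tangent. -/
noncomputable def artanh (x : ℝ) : ℝ := (1 / 2) * Real.log ((1 + x) / (1 - x))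

/-- Inverse hyperbolic cosine. -/
noncomputable def arcosh (x : ℝ) : ℝ := Real.log (x + Real.sqrt (x ^ 2 - 1))

/-!
With `a = b = 1` and `s = sin (φ / 2)` one has `D t = 2 (1 + (s sinh t)²)`, and then
`tanh (d t / 2) = √(1 - 2 / D t)` says exactly that `d t = 2 arsinh |s sinh t|`.
The expansion of `d t ²` is therefore that of `4 arsinh (s sinh t)²`, which follows from the
fifth-order Taylor remainders `sinh x = x + x³/6 + O(x⁵)` and `arsinh x = x - x³/6 + O(x⁵)`;
the error is in fact `O(t⁶)`.
-/

open Topology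

lemma artanh_eq_real_artanh {x : ℝ} (hx : x ∈ Set.Icc (-1) 1) :
    _root_.artanh x = Real.artanh x :=
  (Real.artanh_eq_half_log hx).symm

lemma artanh_sqrt_one_sub_inv_one_add_sq (m : ℝ) :
    _root_.artanh √(1 - (1 + m ^ 2)⁻¹) = arsinh |m| := by
  have htanh : √(1 - (1 + m ^ 2)⁻¹) = tanh (arsinh |m|) := by
    rw [tanh_arsinh, sq_abs, ← sqrt_sq (abs_nonneg m), ← sqrt_div' _ (by positivity), sq_abs]
    congr 1
    field_simp
    ring
  rw [htanh, artanh_eq_real_artanh ⟨(neg_one_lt_tanh _).le, (tanh_lt_one _).le⟩, artanh_tanh]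

lemma arsinh_abs (x : ℝ) : arsinh |x| = |arsinh x| := by
  rcases le_total 0 x with hx | hx
  · rw [abs_of_nonneg hx, abs_of_nonneg (arsinh_nonneg_iff.mpr hx)]
  · rw [abs_of_nonpos hx, abs_of_nonpos (arsinh_nonpos_iff.mpr hx), arsinh_neg]

lemma cos_eq_one_sub_two_mul_sin_half_sq (φ : ℝ) : cos φ = 1 - 2 * sin (φ / 2) ^ 2 := by
  conv_lhs => rw [← add_halves φ, ← two_mul, cos_two_mul, cos_sq']
  ring

lemma sin_sq_eq_four_mul_sin_half_sq (φ : ℝ) :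
    sin φ ^ 2 = 4 * sin (φ / 2) ^ 2 * (1 - sin (φ / 2) ^ 2) := by
  conv_lhs => rw [← add_halves φ, ← two_mul, sin_two_mul]
  linear_combination 4 * sin (φ / 2) ^ 2 * sin_sq_add_cos_sq (φ / 2)

lemma one_add_cosh_sq_sub_sinh_sq_mul_cos (t φ : ℝ) :
    1 + cosh t * cosh t - sinh t * sinh t * cos φ = 2 * (1 + (sin (φ / 2) * sinh t) ^ 2) := by
  rw [cos_eq_one_sub_two_mul_sin_half_sq φ]
  linear_combination cosh_sq t

lemma abs_inv_sqrt_one_add_sq_sub_le (y : ℝ) :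
    |(√(1 + y ^ 2))⁻¹ - (1 - y ^ 2 / 2)| ≤ 3 / 8 * y ^ 4 := by
  set w := √(1 + y ^ 2)
  have hw2 : w ^ 2 = 1 + y ^ 2 := sq_sqrt (by positivity)
  have hw1 : 1 ≤ w := by nlinarith [sqrt_nonneg (1 + y ^ 2), sq_nonneg y]
  have hid : w⁻¹ - (1 - y ^ 2 / 2) = y ^ 4 * (2 + w) / (2 * w * (1 + w) ^ 2) := by
    rw [show y ^ 4 = (w ^ 2 - 1) ^ 2 by rw [hw2]; ring, show y ^ 2 = w ^ 2 - 1 by rw [hw2]; ring]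
    field_simp
    ring
  have hkey : 2 + w ≤ 3 / 4 * (w * (1 + w) ^ 2) := by
    nlinarith [mul_nonneg (sub_nonneg.mpr hw1) (sq_nonneg w), sq_nonneg (w - 1)]
  rw [hid, abs_of_nonneg (by positivity), div_le_iff₀ (by positivity)]
  nlinarith [mul_le_mul_of_nonneg_left hkey (by positivity : (0 : ℝ) ≤ y ^ 4)]

lemma abs_arsinh_sub_le (x : ℝ) : |arsinh x - (x - x ^ 3 / 6)| ≤ 3 / 8 * |x| ^ 5 := by
  have hderiv : ∀ y, HasDerivAt (fun y => arsinh y - (y - y ^ 3 / 6))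
      ((√(1 + y ^ 2))⁻¹ - (1 - y ^ 2 / 2)) y := fun y =>
    (hasDerivAt_arsinh y).sub
      (((hasDerivAt_id y).sub ((hasDerivAt_pow 3 y).div_const 6)).congr_deriv (by simp; ring))
  have hbound : ∀ y ∈ Set.Icc (-|x|) |x|,
      ‖(√(1 + y ^ 2))⁻¹ - (1 - y ^ 2 / 2)‖ ≤ 3 / 8 * |x| ^ 4 := fun y hy => by
    have hy4 : y ^ 4 ≤ |x| ^ 4 := (Even.pow_abs ⟨2, rfl⟩ y).symm.trans_le
      (pow_le_pow_left₀ (abs_nonneg y) (abs_le.mpr hy) 4)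
    rw [norm_eq_abs]
    linarith [abs_inv_sqrt_one_add_sq_sub_le y]
  have hmvt := (convex_Icc (-|x|) |x|).norm_image_sub_le_of_norm_hasDerivWithin_le
    (fun y _ => (hderiv y).hasDerivWithinAt) hbound
    ⟨neg_nonpos.mpr (abs_nonneg x), abs_nonneg x⟩ ⟨neg_abs_le x, le_abs_self x⟩
  simp only [arsinh_zero, norm_eq_abs, sub_zero, zero_pow three_ne_zero, zero_div] at hmvt
  calc |arsinh x - (x - x ^ 3 / 6)| ≤ 3 / 8 * |x| ^ 4 * |x| := hmvt
    _ = 3 / 8 * |x| ^ 5 := by ring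

lemma abs_sinh_sub_le {x : ℝ} (hx : |x| ≤ 1) : |sinh x - (x + x ^ 3 / 6)| ≤ |x| ^ 5 := by
  have hpos := exp_bound hx (n := 5) (by norm_num)
  have hneg := exp_bound (x := -x) (by rwa [abs_neg]) (n := 5) (by norm_num)
  rw [abs_neg] at hneg
  simp only [Finset.sum_range_succ, Finset.sum_range_zero] at hpos hneg
  norm_num [Nat.factorial] at hpos hneg
  rw [sinh_eq, abs_le]
  constructor <;> nlinarith [abs_le.mp hpos, abs_le.mp hneg, abs_nonneg x]

lemma arsinh_sub_isBigO :
    (fun x => arsinh x - (x - x ^ 3 / 6)) =O[𝓝 0] fun x => x ^ 5 :=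
  IsBigO.of_bound (3 / 8) <| Eventually.of_forall fun x => by
    simpa only [norm_eq_abs, abs_pow] using abs_arsinh_sub_le x

lemma sinh_sub_isBigO :
    (fun x => sinh x - (x + x ^ 3 / 6)) =O[𝓝 0] fun x => x ^ 5 := by
  refine IsBigO.of_bound 1 ?_
  filter_upwards [Metric.closedBall_mem_nhds (0 : ℝ) one_pos] with x hx
  rw [Metric.mem_closedBall, dist_zero_right, norm_eq_abs] at hx
  simpa only [norm_eq_abs, abs_pow, one_mul] using abs_sinh_sub_le hx

lemma sinh_isBigO_id : sinh =O[𝓝 0] fun x => x := by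
  simpa using (hasDerivAt_sinh 0).hasFDerivAt.isBigO_sub

lemma sinh_sub_self_isBigO : (fun x => sinh x - x) =O[𝓝 0] fun x => x ^ 3 := by
  have hcube : (fun x : ℝ => x ^ 3 / 6) =O[𝓝 0] fun x => x ^ 3 :=
    (isBigO_refl _ _).const_mul_left (1 / 6) |>.congr_left fun x => by ring
  refine ((sinh_sub_isBigO.trans (isLittleO_pow_pow (by norm_num : 3 < 5)).isBigO).add
    hcube).congr_left fun x => by ring

lemma sinh_pow_three_sub_isBigO : (fun x => sinh x ^ 3 - x ^ 3) =O[𝓝 0] fun x => x ^ 5 := by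
  have hquad : (fun x => sinh x ^ 2 + x * sinh x + x ^ 2) =O[𝓝 0] fun x => x ^ 2 :=
    ((sinh_isBigO_id.pow 2).add (((isBigO_refl _ _).mul sinh_isBigO_id).congr_right
      fun x => by ring)).add (isBigO_refl _ _)
  exact (sinh_sub_self_isBigO.mul hquad).congr (fun x => by ring) fun x => by ring

lemma arsinh_mul_sinh_sub_isBigO (s : ℝ) :
    (fun t => arsinh (s * sinh t) - (s * t + s * (1 - s ^ 2) / 6 * t ^ 3))
      =O[𝓝 0] fun t => t ^ 5 := by
  have hm : Tendsto (fun t => s * sinh t) (𝓝 0) (𝓝 0) := by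
    simpa using (continuous_sinh.tendsto 0).const_mul s
  have hm5 : (fun t => (s * sinh t) ^ 5) =O[𝓝 0] fun t => t ^ 5 :=
    ((sinh_isBigO_id.pow 5).const_mul_left (s ^ 5)).congr_left fun t => by ring
  have := (((arsinh_sub_isBigO.comp_tendsto hm).trans hm5).add
    (sinh_sub_isBigO.const_mul_left s)).sub (sinh_pow_three_sub_isBigO.const_mul_left (s ^ 3 / 6))
  exact this.congr_left fun t => by simp only [Function.comp]; ring

lemma isBigO_sq_sub_sq {α : Type*} {l : Filter α} {f g u v : α → ℝ}
    (hfg : (fun x => f x - g x) =O[l] u) (hg : g =O[l] v) (huv : u =O[l] v) :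
    (fun x => f x ^ 2 - g x ^ 2) =O[l] fun x => u x * v x :=
  (hfg.mul ((hfg.trans huv).add (hg.const_mul_left 2))).congr_left fun x => by ring

lemma arsinh_mul_sinh_sq_sub_isBigO (s : ℝ) :
    (fun t => arsinh (s * sinh t) ^ 2 - (s ^ 2 * t ^ 2 + s ^ 2 * (1 - s ^ 2) / 3 * t ^ 4))
      =O[𝓝 0] fun t => t ^ 6 := by
  have hp : (fun t : ℝ => s * t + s * (1 - s ^ 2) / 6 * t ^ 3) =O[𝓝 0] fun t => t :=
    ((isBigO_refl _ _).const_mul_left s).add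
      (((isLittleO_pow_pow (by norm_num : 1 < 3)).isBigO.const_mul_left _).congr_right
        fun t => pow_one t)
  have h5 : (fun t : ℝ => t ^ 5) =O[𝓝 0] fun t => t :=
    (isLittleO_pow_pow (by norm_num : 1 < 5)).isBigO.congr_right fun t => pow_one t
  have h6 : (fun t : ℝ => (s * (1 - s ^ 2) / 6) ^ 2 * t ^ 6) =O[𝓝 0] fun t => t ^ 6 :=
    (isBigO_refl _ _).const_mul_left _
  exact ((isBigO_sq_sub_sq (arsinh_mul_sinh_sub_isBigO s) hp h5).congr_right
    (fun t => by ring)).add h6 |>.congr_left fun t => by ring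

theorem hyperbolic_squared_distance_expansion_general
    (u v : EuclideanSpace ℝ (Fin 2)) (hu : ‖u‖ = 1) (hv : ‖v‖ = 1)
    (φ : ℝ)
    (a b : ℝ) (hab : a = ‖u‖) (hbb : b = ‖v‖)
    (D d : ℝ → ℝ)
    (hD : ∀ t, D t = 1 + Real.cosh (t * a) * Real.cosh (t * b)
            - Real.sinh (t * a) * Real.sinh (t * b) * Real.cos φ)
    (hd : ∀ t, d t = 2 * _root_.artanh (Real.sqrt (1 - 2 / D t))) :
    (fun t => d t ^ 2
        - (t ^ 2 * (a ^ 2 + b ^ 2 - 2 * a * b * Real.cos φ)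
          + (1 / 3) * t ^ 4 * a ^ 2 * b ^ 2 * Real.sin φ ^ 2))
      =o[nhds 0] fun t => t ^ 4 := by
  obtain rfl : a = 1 := hab.trans hu
  obtain rfl : b = 1 := hbb.trans hv
  have hd_sq : ∀ t, d t ^ 2 = 4 * arsinh (sin (φ / 2) * sinh t) ^ 2 := fun t => by
    have hD' : 1 - 2 / D t = 1 - (1 + (sin (φ / 2) * sinh t) ^ 2)⁻¹ := by
      rw [hD, mul_one, one_add_cosh_sq_sub_sinh_sq_mul_cos]
      field_simp
    rw [hd, hD', artanh_sqrt_one_sub_inv_one_add_sq, arsinh_abs, mul_pow, sq_abs]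
    ring
  refine ((arsinh_mul_sinh_sq_sub_isBigO (sin (φ / 2))).const_mul_left 4 |>.trans_isLittleO
    (isLittleO_pow_pow (by norm_num : 4 < 6))).congr_left fun t => ?_
  rw [hd_sq, cos_eq_one_sub_two_mul_sin_half_sq φ, sin_sq_eq_four_mul_sin_half_sq φ]
  ring

theorem hyperbolic_squared_distance_expansion
    (u v : EuclideanSpace ℝ (Fin 2)) (hu : ‖u‖ = 1) (hv : ‖v‖ = 1)
    (φ : ℝ) (huv : ⟪u, v⟫_ℝ = ‖u‖ * ‖v‖ * Real.cos φ)
    (a b : ℝ) (hab : a = ‖u‖) (hbb : b = ‖v‖)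
    (D d : ℝ → ℝ)
    (hD : ∀ t, D t = 1 + Real.cosh (t * a) * Real.cosh (t * b)
            - Real.sinh (t * a) * Real.sinh (t * b) * Real.cos φ)
    (hd : ∀ t, d t = 2 * _root_.artanh (Real.sqrt (1 - 2 / D t))) :
    (fun t => d t ^ 2
        - (t ^ 2 * (a ^ 2 + b ^ 2 - 2 * a * b * Real.cos φ)
          + (1 / 3) * t ^ 4 * a ^ 2 * b ^ 2 * Real.sin φ ^ 2))
      =o[nhds 0] fun t => t ^ 4 :=
  hyperbolic_squared_distance_expansion_general u v hu hv φ a b hab hbb D d hD hd
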